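/- For every deterministic parity automaton A over the alphabet ℕ, the ω-language L_A is a finite Boolean combination of Gδ subsets of the Baire space ℕ^ω (i.e., L_A belongs to the Boolean algebra of subsets of ℕ^ω generated by the Gδ sets); in particular, L_A is a Borel subset of the Baire space. -/

import Mathlib

/-- The maximal color occurring infinitely often in the sequence `s` exists and is even. -/
def MaxInfEven (s : ℕ → ℕ) : Prop :=
  ∃ m, Even m ∧ {k | s k = m}.Infinite ∧ ∀ m', {k | s k = m'}.Infinite → m' ≤ m

/-- A deterministic parity automaton over the alphabet ℕ, with control states `Q`,
configurations in `Q × ℕ`, transition function `next` and coloring `color`. -/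
structure DPA (Q : Type) where
  q0 : Q
  next : Q × ℕ → ℕ → Q × ℕ
  color : Q → ℕ

/-- The run of `A` on `α`: the sequence of configurations starting in `(q₀, 0)`. -/
def DPA.run {Q : Type} (A : DPA Q) (α : ℕ → ℕ) : ℕ → Q × ℕ
  | 0 => (A.q0, 0)
  | k + 1 => A.next (DPA.run A α k) (α k)

/-- The ω-language recognized by `A`: the ω-words whose run has an even maximal color
occurring infinitely often. -/
def DPA.Lang {Q : Type} (A : DPA Q) : Set (ℕ → ℕ) :=
  {α | MaxInfEven (fun k => A.color (A.run α k).1)}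

/-- The Boolean combinations of a family `S` of sets: the smallest collection containing
`S` and closed under complement and (binary) union. -/
inductive BoolComb {X : Type} (S : Set (Set X)) : Set X → Prop
  | basic {s : Set X} : s ∈ S → BoolComb S s
  | compl {s : Set X} : BoolComb S s → BoolComb S sᶜ
  | union {s t : Set X} : BoolComb S s → BoolComb S t → BoolComb S (s ∪ t)

open Filter

/-!
Each configuration `A.run α k` depends only on the first `k` letters of `α`, so for every
color `m` the set of words whose run visits color `m` infinitely often is a Gδ set. Since
`Q` is finite only finitely many colors occur, and `α ∈ L_A` iff some even color `m` is
visited infinitely often while no larger color is; this is a finite Boolean combination of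
those Gδ sets.
-/

lemma isGδ_setOf_frequently_mem {X : Type*} [TopologicalSpace X] {U : ℕ → Set X}
    (hU : ∀ n, IsOpen (U n)) : IsGδ {x | ∃ᶠ n in atTop, x ∈ U n} := by
  have h : {x | ∃ᶠ n in atTop, x ∈ U n} = ⋂ N, ⋃ n ≥ N, U n := by
    ext x
    simp [frequently_atTop]
  rw [h]
  exact .iInter_of_isOpen fun N => isOpen_biUnion fun n _ => hU n

namespace BoolComb

variable {X : Type} {S : Set (Set X)}

lemma inter {s t : Set X} (hs : BoolComb S s) (ht : BoolComb S t) : BoolComb S (s ∩ t) := by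
  rw [← compl_compl (s ∩ t), Set.compl_inter]
  exact (hs.compl.union ht.compl).compl

lemma diff {s t : Set X} (hs : BoolComb S s) (ht : BoolComb S t) : BoolComb S (s \ t) :=
  hs.inter ht.compl

lemma biUnion {ι : Type*} (hempty : BoolComb S ∅) (F : Finset ι) {f : ι → Set X}
    (hf : ∀ i ∈ F, BoolComb S (f i)) : BoolComb S (⋃ i ∈ F, f i) := by
  classical
  induction F using Finset.induction with
  | empty => simpa using hempty
  | insert a F _ ih =>
    rw [Finset.set_biUnion_insert]
    exact (hf a (F.mem_insert_self a)).union (ih fun i hi => hf i (F.mem_insert_of_mem hi))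

lemma measurableSet [TopologicalSpace X] [MeasurableSpace X] [OpensMeasurableSpace X]
    {s : Set X} (h : BoolComb {s : Set X | IsGδ s} s) : MeasurableSet s := by
  induction h with
  | basic hs => exact hs.measurableSet
  | compl _ ih => exact ih.compl
  | union _ _ ihs iht => exact ihs.union iht

end BoolComb

lemma maxInfEven_iff_of_forall_mem {F : Finset ℕ} {s : ℕ → ℕ} (hs : ∀ k, s k ∈ F) :
    MaxInfEven s ↔ ∃ m ∈ F.filter Even, {k | s k = m}.Infinite ∧
      ∀ m' ∈ F.filter (m < ·), ¬{k | s k = m'}.Infinite := by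
  have mem_of_infinite {m : ℕ} (hm : {k | s k = m}.Infinite) : m ∈ F := by
    obtain ⟨k, rfl⟩ := hm.nonempty
    exact hs k
  simp only [MaxInfEven, Finset.mem_filter]
  constructor
  · rintro ⟨m, hev, hinf, hmax⟩
    exact ⟨m, ⟨mem_of_infinite hinf, hev⟩, hinf,
      fun m' ⟨_, hlt⟩ hinf' => (hmax m' hinf').not_gt hlt⟩
  · rintro ⟨m, ⟨_, hev⟩, hinf, hmax⟩
    exact ⟨m, hev, hinf, fun m' hinf' =>
      not_lt.1 fun hlt => hmax m' ⟨mem_of_infinite hinf', hlt⟩ hinf'⟩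

namespace DPA

variable {Q : Type} (A : DPA Q)

lemma isLocallyConstant_run (k : ℕ) : IsLocallyConstant (A.run · k) := by
  induction k with
  | zero => exact IsLocallyConstant.const _
  | succ k ih =>
    exact ih.comp₂ ((IsLocallyConstant.iff_continuous _).2 (continuous_apply k)) A.next

def infOften (m : ℕ) : Set (ℕ → ℕ) :=
  {α | ∃ᶠ k in atTop, A.color (A.run α k).1 = m}

lemma isGδ_infOften (m : ℕ) : IsGδ (A.infOften m) :=
  isGδ_setOf_frequently_mem (U := fun k => {α | A.color (A.run α k).1 = m})
    fun k => A.isLocallyConstant_run k {c | A.color c.1 = m}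

lemma lang_eq_biUnion [Fintype Q] :
    A.Lang = ⋃ m ∈ (Finset.univ.image A.color).filter Even,
      A.infOften m \ ⋃ m' ∈ (Finset.univ.image A.color).filter (m < ·), A.infOften m' := by
  ext α
  simp only [Lang, Set.mem_ofPred_eq, Set.mem_iUnion, Set.mem_sdiff, infOften,
    Nat.frequently_atTop_iff_infinite, exists_prop, not_exists, not_and]
  exact maxInfEven_iff_of_forall_mem fun k => Finset.mem_image_of_mem _ (Finset.mem_univ _)

end DPA

/-- `L_A` is a finite Boolean combination of Gδ subsets of the Baire space; in
particular it is Borel. -/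
theorem statement4 {Q : Type} [Fintype Q] (A : DPA Q) :
    BoolComb {s : Set (ℕ → ℕ) | IsGδ s} A.Lang ∧
    @MeasurableSet (ℕ → ℕ) (borel (ℕ → ℕ)) A.Lang := by
  have hempty : BoolComb {s : Set (ℕ → ℕ) | IsGδ s} ∅ := .basic IsGδ.empty
  have hinfOften (m : ℕ) : BoolComb {s : Set (ℕ → ℕ) | IsGδ s} (A.infOften m) :=
    .basic (A.isGδ_infOften m)
  have hLang : BoolComb {s : Set (ℕ → ℕ) | IsGδ s} A.Lang := by
    rw [A.lang_eq_biUnion]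
    exact .biUnion hempty _ fun m _ =>
      (hinfOften m).diff (.biUnion hempty _ fun m' _ => hinfOften m')
  let _ : MeasurableSpace (ℕ → ℕ) := borel (ℕ → ℕ)
  have : BorelSpace (ℕ → ℕ) := ⟨rfl⟩
  exact ⟨hLang, hLang.measurableSet⟩
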